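/- arXiv:2210.13915 — 11 statements merged into one kernel-verified Lean document; each statement's English description precedes it below -/
import Mathlib

section
/- Every contrastive singleton is contained in every explanation. Formally: if {s} is a contrastive singleton for instance (v,c), then for every explanation E of (v,c), s ∈ E. -/
variable {F K : Type*} [Fintype F] [DecidableEq F] {D : F → Type*}

/-- `E` is an (abductive) explanation of instance `(v, c)` for classifier `N`. -/
def IsExplanation (N : (∀ i : F, D i) → K) (v : ∀ i : F, D i) (c : K) (E : Finset F) : Prop :=
  ∀ x : ∀ i : F, D i, (∀ i ∈ E, x i = v i) → N x = c

/-- `C` is a contrastive example of instance `(v, c)` for classifier `N`. -/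
def IsContrastive (N : (∀ i : F, D i) → K) (v : ∀ i : F, D i) (c : K) (C : Finset F) : Prop :=
  ∃ x : ∀ i : F, D i, (∀ i ∉ C, x i = v i) ∧ N x ≠ c

theorem singleton_in_every_explanation
    (N : (∀ i : F, D i) → K) (v : ∀ i : F, D i) (c : K) (hc : N v = c)
    (s : F) (hs : IsContrastive N v c {s})
    (E : Finset F) (hE : IsExplanation N v c E) :
    s ∈ E := by
  by_contra hsE
  obtain ⟨x, hx, hNx⟩ := hs
  exact hNx (hE x fun i hi => hx i (by simp only [Finset.mem_singleton]; rintro rfl; exact hsE hi))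
end

section
/- At least one element of every contrastive pair is contained in every explanation. Formally: if {a,b} is a contrastive example of (v,c) and E is any explanation of (v,c), then a ∈ E or b ∈ E. -/
variable {F K : Type*} [Fintype F] [DecidableEq F] {D : F → Type*}

theorem pair_element_in_every_explanation
    (N : (∀ i : F, D i) → K) (v : ∀ i : F, D i) (c : K) (hc : N v = c)
    (a b : F) (hab : a ≠ b) (hP : IsContrastive N v c {a, b})
    (E : Finset F) (hE : IsExplanation N v c E) :
    a ∈ E ∨ b ∈ E := by
  by_contra h
  push_neg at h
  obtain ⟨x, hx, hne⟩ := hP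
  exact hne (hE x fun i hi => hx i (by
    simp only [Finset.mem_insert, Finset.mem_singleton]
    rintro (rfl | rfl)
    · exact h.1 hi
    · exact h.2 hi))
end

section
/- Every explanation is a hitting set of the collection of all contrastive examples: if E is an explanation of (v,c) and C is any contrastive example of (v,c), then E ∩ C ≠ ∅. -/
variable {F K : Type*} [Fintype F] [DecidableEq F] {D : F → Type*}

theorem explanation_hits_every_contrastive
    (N : (∀ i : F, D i) → K) (v : ∀ i : F, D i) (c : K) (hc : N v = c)
    (E : Finset F) (hE : IsExplanation N v c E)
    (C : Finset F) (hC : IsContrastive N v c C) :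
    E ∩ C ≠ ∅ := by
  intro h
  obtain ⟨x, hx, hne⟩ := hC
  apply hne
  apply hE
  intro i hi
  apply hx
  intro hiC
  have : i ∈ E ∩ C := Finset.mem_inter.mpr ⟨hi, hiC⟩
  simp [h] at this
end

section
/- A subset E ⊆ F is an explanation of (v,c) if and only if E is a hitting set of the collection of all contrastive examples of (v,c). -/
variable {F K : Type*} [Fintype F] [DecidableEq F] {D : F → Type*}

theorem explanation_iff_hitting_set_of_contrastives
    (N : (∀ i : F, D i) → K) (v : ∀ i : F, D i) (c : K) (hc : N v = c)
    (E : Finset F) :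
    IsExplanation N v c E ↔
      ∀ C : Finset F, IsContrastive N v c C → E ∩ C ≠ ∅ := by
  constructor
  · rintro hE C ⟨x, hx, hNx⟩ hEC
    exact hNx (hE x fun i hi => hx i fun hiC =>
      Finset.notMem_empty i (hEC ▸ Finset.mem_inter.2 ⟨hi, hiC⟩))
  · intro h x hx
    by_contra hNx
    have : IsContrastive N v c Eᶜ :=
      ⟨x, fun i hi => hx i (by simpa using hi), hNx⟩
    exact h Eᶜ this (by simp)
end

section
/- A subset C ⊆ F is a contrastive example of (v,c) if and only if C is a hitting set of the collection of all explanations of (v,c). (One direction requires that there exists at least one input misclassifying relative to c when all features are free, i.e., N is not constantly c on 𝔽.) -/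
variable {F K : Type*} [Fintype F] [DecidableEq F] {D : F → Type*}

theorem contrastive_iff_hitting_set_of_explanations
    (N : (∀ i : F, D i) → K) (v : ∀ i : F, D i) (c : K) (hc : N v = c)
    (hnc : ∃ y : ∀ i : F, D i, N y ≠ c)
    (C : Finset F) :
    IsContrastive N v c C ↔
      ∀ E : Finset F, IsExplanation N v c E → C ∩ E ≠ ∅ := by
  constructor
  · rintro ⟨x, hx, hxc⟩ E hE hCE
    exact hxc (hE x fun i hiE => hx i fun hiC =>
      Finset.eq_empty_iff_forall_notMem.mp hCE i (Finset.mem_inter.mpr ⟨hiC, hiE⟩))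
  · intro h
    by_contra hnot
    refine h (Finset.univ \ C) (fun x hx => ?_) ?_
    · by_contra hxc
      exact hnot ⟨x, fun i hiC => hx i (Finset.mem_sdiff.mpr ⟨Finset.mem_univ i, hiC⟩), hxc⟩
    · ext i
      simp [Finset.mem_inter, Finset.mem_sdiff, imp_not_comm]
end

section
/- The set of all contrastive singletons together with a minimum vertex cover of the graph of all contrastive pairs gives a lower bound on the size of any explanation: if S is the set of all contrastive singletons of (v,c), P is the set of all contrastive pairs (contrastive examples of size 2 not containing a singleton), V ⊆ F \ S is a minimum vertex cover of the graph with edge set P, and E is any explanation of (v,c), then |S| + |V| ≤ |E|. -/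
variable {F K : Type*} [Fintype F] [DecidableEq F] {D : F → Type*}

theorem singletons_plus_mvc_lower_bound
    (N : (∀ i : F, D i) → K) (v : ∀ i : F, D i) (c : K) (hc : N v = c)
    (S : Finset F) (hS : ∀ s : F, s ∈ S ↔ IsContrastive N v c {s})
    (P : Finset (Finset F))
    (hP : ∀ p : Finset F, p ∈ P ↔
      ∃ a b : F, a ≠ b ∧ p = {a, b} ∧ IsContrastive N v c p ∧ a ∉ S ∧ b ∉ S)
    (V : Finset F) (hVsub : V ⊆ Finset.univ \ S)
    (hVcover : ∀ p ∈ P, ∃ x ∈ V, x ∈ p)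
    (hVmin : ∀ V' : Finset F, V' ⊆ Finset.univ \ S →
      (∀ p ∈ P, ∃ x ∈ V', x ∈ p) → V.card ≤ V'.card)
    (E : Finset F) (hE : IsExplanation N v c E) :
    S.card + V.card ≤ E.card := by
  have hSE : S ⊆ E := by
    intro s hs
    by_contra hsE
    obtain ⟨x, hx, hxc⟩ := (hS s).mp hs
    exact hxc (hE x (fun i hi => hx i (by
      simp only [Finset.mem_singleton]; rintro rfl; exact hsE hi)))
  have hcover : ∀ p ∈ P, ∃ x ∈ E \ S, x ∈ p := by
    intro p hp
    obtain ⟨a, b, hab, rfl, ⟨x, hx, hxc⟩, haS, hbS⟩ := (hP p).mp hp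
    by_contra h
    push_neg at h
    have haE : a ∉ E := fun hA => h a (Finset.mem_sdiff.mpr ⟨hA, haS⟩) (by simp)
    have hbE : b ∉ E := fun hB => h b (Finset.mem_sdiff.mpr ⟨hB, hbS⟩) (by simp)
    refine hxc (hE x fun i hi => hx i ?_)
    simp only [Finset.mem_insert, Finset.mem_singleton]
    rintro (rfl | rfl)
    · exact haE hi
    · exact hbE hi
  have hVle : V.card ≤ (E \ S).card :=
    hVmin _ (fun x hx => Finset.mem_sdiff.mpr ⟨Finset.mem_univ x, (Finset.mem_sdiff.mp hx).2⟩) hcover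
  have h1 : (E \ S).card = E.card - S.card := Finset.card_sdiff_of_subset hSE
  have h2 : S.card ≤ E.card := Finset.card_le_card hSE
  omega
end

section
/- Every contrastive bundle singleton is contained in every bundle explanation: if B is a partition of F, {b} (b ∈ B) is a contrastive bundle example of (v,c), and E_B ⊆ B is a bundle explanation of (v,c), then b ∈ E_B. -/
variable {F K : Type*} [Fintype F] [DecidableEq F] {D : F → Type*}

/-- `B` is a partition of the feature set into disjoint nonempty bundles. -/
def IsBundlePartition (B : Finset (Finset F)) : Prop :=
  (∀ b ∈ B, b.Nonempty) ∧ (∀ b₁ ∈ B, ∀ b₂ ∈ B, b₁ ≠ b₂ → Disjoint b₁ b₂) ∧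
    B.biUnion id = Finset.univ

/-- `E_B ⊆ B` is a bundle explanation of `(v, c)`. -/
def IsBundleExplanation (N : (∀ i : F, D i) → K) (v : ∀ i : F, D i) (c : K)
    (B E_B : Finset (Finset F)) : Prop :=
  E_B ⊆ B ∧ ∀ x : ∀ i : F, D i, (∀ i ∈ E_B.biUnion id, x i = v i) → N x = c

/-- `C_B ⊆ B` is a contrastive bundle example of `(v, c)`. -/
def IsBundleContrastive (N : (∀ i : F, D i) → K) (v : ∀ i : F, D i) (c : K)
    (B C_B : Finset (Finset F)) : Prop :=
  C_B ⊆ B ∧ ∃ x : ∀ i : F, D i, (∀ i ∈ (B \ C_B).biUnion id, x i = v i) ∧ N x ≠ c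

theorem bundle_singleton_in_every_bundle_explanation
    (N : (∀ i : F, D i) → K) (v : ∀ i : F, D i) (c : K) (hc : N v = c)
    (B : Finset (Finset F)) (hB : IsBundlePartition B)
    (b : Finset F) (hb : b ∈ B)
    (hbs : IsBundleContrastive N v c B {b})
    (E_B : Finset (Finset F)) (hEB : IsBundleExplanation N v c B E_B) :
    b ∈ E_B := by
  by_contra hbE
  obtain ⟨x, hx, hxc⟩ := hbs.2
  apply hxc
  apply hEB.2 x
  intro i hi
  apply hx
  simp only [Finset.mem_biUnion, id] at hi ⊢
  obtain ⟨e, heE, hie⟩ := hi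
  exact ⟨e, Finset.mem_sdiff.2 ⟨hEB.1 heE, by simp; rintro rfl; exact hbE heE⟩, hie⟩
end

section
/- At least one bundle of every contrastive bundle pair is contained in every bundle explanation: if {b₁,b₂} ⊆ B is a contrastive bundle example of (v,c) and E_B ⊆ B is a bundle explanation of (v,c), then b₁ ∈ E_B or b₂ ∈ E_B. -/
variable {F K : Type*} [Fintype F] [DecidableEq F] {D : F → Type*}

theorem bundle_pair_element_in_every_bundle_explanation
    (N : (∀ i : F, D i) → K) (v : ∀ i : F, D i) (c : K) (hc : N v = c)
    (B : Finset (Finset F)) (hB : IsBundlePartition B)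
    (b₁ b₂ : Finset F) (hb₁ : b₁ ∈ B) (hb₂ : b₂ ∈ B) (hne : b₁ ≠ b₂)
    (hpair : IsBundleContrastive N v c B {b₁, b₂})
    (E_B : Finset (Finset F)) (hEB : IsBundleExplanation N v c B E_B) :
    b₁ ∈ E_B ∨ b₂ ∈ E_B := by
  by_contra h
  push_neg at h
  obtain ⟨h1, h2⟩ := h
  obtain ⟨hCB, x, hx, hxc⟩ := hpair
  obtain ⟨hEsub, hE⟩ := hEB
  apply hxc
  apply hE
  intro i hi
  apply hx
  simp only [Finset.mem_biUnion, id] at hi ⊢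
  obtain ⟨b, hbE, hib⟩ := hi
  exact ⟨b, Finset.mem_sdiff.mpr ⟨hEsub hbE, by
    simp only [Finset.mem_insert, Finset.mem_singleton]
    rintro (rfl|rfl) <;> [exact h1 hbE; exact h2 hbE]⟩, hib⟩
end

section
/- If E is a minimal explanation of (v,c) (removing any single feature destroys the explanation property), then for every feature j ∈ E there exists a contrastive example C of (v,c) with C ∩ E = {j}. -/
variable {F K : Type*} [Fintype F] [DecidableEq F] {D : F → Type*}

theorem minimal_explanation_has_witnessing_contrastive
    (N : (∀ i : F, D i) → K) (v : ∀ i : F, D i) (c : K) (hc : N v = c)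
    (E : Finset F) (hE : IsExplanation N v c E)
    (hmin : ∀ j ∈ E, ¬ IsExplanation N v c (E \ {j})) :
    ∀ j ∈ E, ∃ C : Finset F, IsContrastive N v c C ∧ C ∩ E = {j} := by
  intro j hj
  have h := hmin j hj
  simp only [IsExplanation, not_forall] at h
  obtain ⟨x, hx, hnx⟩ := h
  refine ⟨Eᶜ ∪ {j}, ⟨x, ?_, hnx⟩, ?_⟩
  · intro i hi
    simp only [Finset.mem_union, Finset.mem_compl, Finset.mem_singleton, not_or, not_not] at hi
    exact hx i (Finset.mem_sdiff.mpr ⟨hi.1, by simpa using hi.2⟩)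
  · ext i
    simp only [Finset.mem_inter, Finset.mem_union, Finset.mem_compl, Finset.mem_singleton]
    constructor
    · rintro ⟨h1, h2⟩; tauto
    · rintro rfl; exact ⟨Or.inr rfl, hj⟩
end

section
/- A minimal hitting set of the collection of all contrastive examples of (v,c) is a minimal explanation of (v,c): if H ⊆ F intersects every contrastive example, and no proper subset of H does, then H is an explanation and H \ {j} is not an explanation for any j ∈ H. -/
variable {F K : Type*} [Fintype F] [DecidableEq F] {D : F → Type*}

theorem minimal_hitting_set_is_minimal_explanation
    (N : (∀ i : F, D i) → K) (v : ∀ i : F, D i) (c : K) (hc : N v = c)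
    (H : Finset F)
    (hhit : ∀ C : Finset F, IsContrastive N v c C → H ∩ C ≠ ∅)
    (hmin : ∀ H' : Finset F, H' ⊂ H →
      ¬ ∀ C : Finset F, IsContrastive N v c C → H' ∩ C ≠ ∅) :
    IsExplanation N v c H ∧
      ∀ j ∈ H, ¬ IsExplanation N v c (H \ {j}) := by
  constructor
  · intro x hx
    by_contra hne
    have hcon : IsContrastive N v c (Finset.univ \ H) := by
      refine ⟨x, fun i hi => ?_, hne⟩
      have : i ∈ H := by
        by_contra h
        exact hi (Finset.mem_sdiff.mpr ⟨Finset.mem_univ i, h⟩)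
      exact hx i this
    apply hhit _ hcon
    ext i
    simp only [Finset.mem_inter, Finset.mem_sdiff, Finset.mem_univ, true_and,
      Finset.notMem_empty, iff_false]
    tauto
  · intro j hj hexp
    have hsub : H \ {j} ⊂ H := by
      refine Finset.sdiff_ssubset ?_ (by simp)
      simpa using hj
    obtain ⟨C, hC, hCe⟩ := by
      have := hmin (H \ {j}) hsub
      push_neg at this
      exact this
    obtain ⟨x, hx, hne⟩ := hC
    apply hne
    apply hexp
    intro i hi
    apply hx
    intro hiC
    have : i ∈ (H \ {j}) ∩ C := Finset.mem_inter.mpr ⟨hi, hiC⟩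
    rw [hCe] at this
    exact Finset.notMem_empty i this
end

section
/- The size of a minimum hitting set of all contrastive examples of (v,c) equals the size of a minimum explanation of (v,c). -/
variable {F K : Type*} [Fintype F] [DecidableEq F] {D : F → Type*}

/-- A set is an explanation iff it intersects every contrastive set. -/
lemma explanation_iff_hits (N : (∀ i : F, D i) → K) (v : ∀ i : F, D i) (c : K)
    (S : Finset F) :
    IsExplanation N v c S ↔ ∀ C : Finset F, IsContrastive N v c C → S ∩ C ≠ ∅ := by
  constructor
  · intro hS C ⟨x, hx, hxc⟩ hdisj
    exact hxc (hS x (fun i hi => hx i (fun hiC =>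
      Finset.notMem_empty i (hdisj ▸ Finset.mem_inter.mpr ⟨hi, hiC⟩))))
  · intro h x hx
    by_contra hxc
    have hC : IsContrastive N v c (Finset.univ \ S) :=
      ⟨x, fun i hi => hx i (by simpa using hi), hxc⟩
    apply h _ hC
    ext i
    simp only [Finset.mem_inter, Finset.mem_sdiff, Finset.mem_univ, true_and,
      Finset.notMem_empty, iff_false]
    tauto

theorem minimum_hitting_set_card_eq_minimum_explanation_card
    (N : (∀ i : F, D i) → K) (v : ∀ i : F, D i) (c : K) (hc : N v = c)
    (H : Finset F)
    (hhit : ∀ C : Finset F, IsContrastive N v c C → H ∩ C ≠ ∅)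
    (hHmin : ∀ H' : Finset F,
      (∀ C : Finset F, IsContrastive N v c C → H' ∩ C ≠ ∅) → H.card ≤ H'.card)
    (E : Finset F) (hE : IsExplanation N v c E)
    (hEmin : ∀ E' : Finset F, IsExplanation N v c E' → E.card ≤ E'.card) :
    H.card = E.card :=
  le_antisymm (hHmin E ((explanation_iff_hits N v c E).mp hE))
    (hEmin H ((explanation_iff_hits N v c H).mpr hhit))
end
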